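/- arXiv:math/0103077 — 4 statements merged into one kernel-verified Lean document; each statement's English description precedes it below -/
import Mathlib

section
/- Define σ_0 = 1, σ_1 = (l_0−l_1)(c−l_0−l_1)/(c+1), and for i ≥ 2, σ_i = [(l_0−l_1)(c+2i−2−l_0−l_1)/(i(i+c))] σ_{i−1} + [(i−2−l_0−l_1)(c+i−2−l_0−l_1)/(i(i+c))] σ_{i−2}. If l_1 = 0, then σ_m = ∏_{j=0}^{m−1} (l_0−j)(c+j−l_0) / ((j+1)(c+j+1)) for all m with 0 ≤ m ≤ l_0. -/
set_option maxHeartbeats 1000000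


open Finset

theorem stmt10 (l₀ l₁ : ℕ) (c : ℂ) (σ : ℕ → ℂ)
    (hl₀ : 0 < l₀) (hl₁ : l₁ = 0)
    (hc : ∀ j : ℕ, j ≤ l₀ + l₁ → c + (j : ℂ) + 1 ≠ 0)
    (h0 : σ 0 = 1)
    (h1 : σ 1 = ((l₀ : ℂ) - (l₁ : ℂ)) * (c - (l₀ : ℂ) - (l₁ : ℂ)) / (c + 1))
    (hrec : ∀ i : ℕ, 2 ≤ i →
      σ i = ((l₀ : ℂ) - (l₁ : ℂ)) * (c + 2 * (i : ℂ) - 2 - (l₀ : ℂ) - (l₁ : ℂ)) /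
              ((i : ℂ) * ((i : ℂ) + c)) * σ (i - 1)
          + ((i : ℂ) - 2 - (l₀ : ℂ) - (l₁ : ℂ)) * (c + (i : ℂ) - 2 - (l₀ : ℂ) - (l₁ : ℂ)) /
              ((i : ℂ) * ((i : ℂ) + c)) * σ (i - 2)) :
    ∀ m : ℕ, m ≤ l₀ →
      σ m = ∏ j ∈ range m,
        ((l₀ : ℂ) - (j : ℂ)) * (c + (j : ℂ) - (l₀ : ℂ)) /
          (((j : ℂ) + 1) * (c + (j : ℂ) + 1)) := by
  subst hl₁
  intro m
  induction m using Nat.strong_induction_on with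
  | _ m ih =>
    match m with
    | 0 => intro _; simpa using h0
    | 1 =>
      intro _
      simp only [prod_range_one, Nat.cast_zero, Nat.cast_one]
      rw [h1]; push_cast; ring_nf
    | k + 2 =>
      intro hm
      have ih1 := ih (k + 1) (by omega) (by omega)
      have ih2 := ih k (by omega) (by omega)
      have hr := hrec (k + 2) (by omega)
      simp only [Nat.add_sub_cancel, show k + 2 - 1 = k + 1 from rfl] at hr
      rw [hr, ih1, ih2, prod_range_succ, prod_range_succ (n := k + 1), prod_range_succ (n := k)]
      set P : ℂ := ∏ j ∈ range k,
        ((l₀ : ℂ) - (j : ℂ)) * (c + (j : ℂ) - (l₀ : ℂ)) /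
          (((j : ℂ) + 1) * (c + (j : ℂ) + 1)) with hP
      have hk1 : ((k : ℂ) + 1) ≠ 0 := by
        exact_mod_cast (Nat.cast_ne_zero (R := ℂ)).mpr (Nat.succ_ne_zero k)
      have hk2 : ((k : ℂ) + 2) ≠ 0 := by
        have : ((k + 2 : ℕ) : ℂ) ≠ 0 := (Nat.cast_ne_zero (R := ℂ)).mpr (by omega)
        push_cast at this; exact this
      have hc1 : c + (k : ℂ) + 1 ≠ 0 := by
        intro h; exact hc k (by omega) (by push_cast; linear_combination h)
      have hc2 : c + (k : ℂ) + 2 ≠ 0 := by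
        intro h; exact hc (k + 1) (by omega) (by push_cast; linear_combination h)
      have key :
          ((l₀ : ℂ)) * (c + 2 * ((k : ℂ) + 2) - 2 - (l₀ : ℂ)) /
              (((k : ℂ) + 2) * (((k : ℂ) + 2) + c)) *
            (((l₀ : ℂ) - (k : ℂ)) * (c + (k : ℂ) - (l₀ : ℂ)) /
              (((k : ℂ) + 1) * (c + (k : ℂ) + 1)))
          + (((k : ℂ) + 2) - 2 - (l₀ : ℂ)) * (c + ((k : ℂ) + 2) - 2 - (l₀ : ℂ)) /
              (((k : ℂ) + 2) * (((k : ℂ) + 2) + c))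
          = ((l₀ : ℂ) - (k : ℂ)) * (c + (k : ℂ) - (l₀ : ℂ)) /
              (((k : ℂ) + 1) * (c + (k : ℂ) + 1)) *
            (((l₀ : ℂ) - ((k : ℂ) + 1)) * (c + ((k : ℂ) + 1) - (l₀ : ℂ)) /
              ((((k : ℂ) + 1) + 1) * (c + ((k : ℂ) + 1) + 1))) := by
        have h2c : ((k : ℂ) + 2) + c ≠ 0 := by
          intro h; exact hc2 (by linear_combination h)
        have hA : ((k:ℂ)+2) * (((k:ℂ)+2)+c) ≠ 0 := mul_ne_zero hk2 h2c
        have hB : ((k:ℂ)+1) * (c+(k:ℂ)+1) ≠ 0 := mul_ne_zero hk1 hc1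
        have hC : (((k:ℂ)+1)+1) * (c+((k:ℂ)+1)+1) ≠ 0 := by
          apply mul_ne_zero
          · intro h; exact hk2 (by linear_combination h)
          · intro h; exact hc2 (by linear_combination h)
        rw [div_mul_div_comm, div_add_div _ _ (mul_ne_zero hA hB) hA, div_mul_div_comm,
          div_eq_div_iff (mul_ne_zero (mul_ne_zero hA hB) hA) (mul_ne_zero hB hC)]
        ring
      push_cast
      linear_combination P * key
end

section
/- Define σ_i by σ_0 = 1, σ_1 = (l_0−l_1)(c−l_0−l_1)/(c+1), σ_i = [(l_0−l_1)(c+2i−2−l_0−l_1)/(i(i+c))]σ_{i−1} + [(i−2−l_0−l_1)(c+i−2−l_0−l_1)/(i(i+c))]σ_{i−2}. If l_1 = l_0 then σ_{2m−1} = 0 and σ_{2m} = ∏_{j=0}^{m−1} (j−l_0)(c+2j−2l_0)/((j+1)(c+2j+2)) for all applicable m. -/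
open Finset

theorem stmt11 (l₀ l₁ : ℕ) (c : ℂ) (σ : ℕ → ℂ)
    (hl₀ : 0 < l₀) (hl₁ : l₁ = l₀)
    (hc : ∀ j : ℕ, j ≤ l₀ + l₁ → c + (j : ℂ) + 1 ≠ 0)
    (h0 : σ 0 = 1)
    (h1 : σ 1 = ((l₀ : ℂ) - (l₁ : ℂ)) * (c - (l₀ : ℂ) - (l₁ : ℂ)) / (c + 1))
    (hrec : ∀ i : ℕ, 2 ≤ i →
      σ i = ((l₀ : ℂ) - (l₁ : ℂ)) * (c + 2 * (i : ℂ) - 2 - (l₀ : ℂ) - (l₁ : ℂ)) /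
              ((i : ℂ) * ((i : ℂ) + c)) * σ (i - 1)
          + ((i : ℂ) - 2 - (l₀ : ℂ) - (l₁ : ℂ)) * (c + (i : ℂ) - 2 - (l₀ : ℂ) - (l₁ : ℂ)) /
              ((i : ℂ) * ((i : ℂ) + c)) * σ (i - 2)) :
    ∀ m : ℕ, 1 ≤ m → 2 * m ≤ l₀ + l₁ →
      σ (2 * m - 1) = 0 ∧
      σ (2 * m) = ∏ j ∈ range m,
        ((j : ℂ) - (l₀ : ℂ)) * (c + 2 * (j : ℂ) - 2 * (l₀ : ℂ)) /
          (((j : ℂ) + 1) * (c + 2 * (j : ℂ) + 2)) := by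
  subst hl₁
  have hodd : ∀ m : ℕ, 1 ≤ m → σ (2 * m - 1) = 0 := by
    intro m hm
    induction m with
    | zero => omega
    | succ n ih =>
      rcases Nat.eq_or_lt_of_le hm with h | h
      · simp only [← h]
        norm_num at h1 ⊢
        simpa using h1
      · have hn : 1 ≤ n := by omega
        have h2 : 2 ≤ 2 * (n + 1) - 1 := by omega
        have := hrec (2 * (n + 1) - 1) h2
        have e1 : 2 * (n + 1) - 1 - 2 = 2 * n - 1 := by omega
        rw [e1] at this
        rw [this, ih hn]
        simp
  have heven : ∀ m : ℕ, σ (2 * m) = ∏ j ∈ range m,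
      ((j : ℂ) - (l₁ : ℂ)) * (c + 2 * (j : ℂ) - 2 * (l₁ : ℂ)) /
        (((j : ℂ) + 1) * (c + 2 * (j : ℂ) + 2)) := by
    intro m
    induction m with
    | zero => simpa using h0
    | succ n ih =>
      have h2 : 2 ≤ 2 * (n + 1) := by omega
      have := hrec (2 * (n + 1)) h2
      have e2 : 2 * (n + 1) - 2 = 2 * n := by omega
      rw [e2, hodd (n + 1) (by omega), ih] at this
      rw [this, prod_range_succ]
      have hcast : ((2 * (n + 1) : ℕ) : ℂ) = 2 * (n : ℂ) + 2 := by push_cast; ring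
      rw [hcast]
      simp only [sub_self, zero_mul, zero_div, zero_add, mul_zero]
      conv_lhs => rw [mul_comm]
      congr 1
      rw [show (2 * (n : ℂ) + 2 - 2 - (l₁ : ℂ) - (l₁ : ℂ)) * (c + (2 * (n : ℂ) + 2) - 2 - (l₁ : ℂ) - (l₁ : ℂ))
          = 2 * (((n : ℂ) - (l₁ : ℂ)) * (c + 2 * (n : ℂ) - 2 * (l₁ : ℂ))) by ring,
        show (2 * (n : ℂ) + 2) * (2 * (n : ℂ) + 2 + c)
          = 2 * (((n : ℂ) + 1) * (c + 2 * (n : ℂ) + 2)) by ring,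
        mul_div_mul_left _ _ (two_ne_zero)]
  exact fun m hm _ => ⟨hodd m hm, heven m⟩
end

section
/- Define σ_i by the recursion σ_0 = 1, σ_1 = (l_0−l_1)(c−l_0−l_1)/(c+1), σ_i = [(l_0−l_1)(c+2i−2−l_0−l_1)/(i(i+c))]σ_{i−1} + [(i−2−l_0−l_1)(c+i−2−l_0−l_1)/(i(i+c))]σ_{i−2}. If l_1 = l_0 − 1, then σ_{2m−1} = [∏_{j=1}^{m−1}(j−l_0) ∏_{j=0}^{m−1}(c+2j+1−2l_0)] / [(m−1)! ∏_{j=0}^{m−1}(c+2j+1)] and σ_{2m} = [∏_{j=1}^{m}(j−l_0) ∏_{j=0}^{m−1}(c+2j+1−2l_0)] / [m! ∏_{j=0}^{m−1}(c+2j+1)]. -/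
open Finset

set_option maxHeartbeats 2000000 in
theorem stmt12 (l₀ l₁ : ℕ) (c : ℂ) (σ : ℕ → ℂ)
    (hl₀ : 1 ≤ l₀) (hl₁ : l₁ = l₀ - 1)
    (hc : ∀ j : ℕ, j ≤ l₀ + l₁ → c + (j : ℂ) + 1 ≠ 0)
    (h0 : σ 0 = 1)
    (h1 : σ 1 = ((l₀ : ℂ) - (l₁ : ℂ)) * (c - (l₀ : ℂ) - (l₁ : ℂ)) / (c + 1))
    (hrec : ∀ i : ℕ, 2 ≤ i →
      σ i = ((l₀ : ℂ) - (l₁ : ℂ)) * (c + 2 * (i : ℂ) - 2 - (l₀ : ℂ) - (l₁ : ℂ)) /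
              ((i : ℂ) * ((i : ℂ) + c)) * σ (i - 1)
          + ((i : ℂ) - 2 - (l₀ : ℂ) - (l₁ : ℂ)) * (c + (i : ℂ) - 2 - (l₀ : ℂ) - (l₁ : ℂ)) /
              ((i : ℂ) * ((i : ℂ) + c)) * σ (i - 2)) :
    ∀ m : ℕ, 1 ≤ m → 2 * m ≤ l₀ + l₁ + 1 →
      σ (2 * m - 1) =
        ((∏ j ∈ Icc 1 (m - 1), ((j : ℂ) - (l₀ : ℂ))) *
          ∏ j ∈ range m, (c + 2 * (j : ℂ) + 1 - 2 * (l₀ : ℂ))) /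
        (((m - 1).factorial : ℂ) * ∏ j ∈ range m, (c + 2 * (j : ℂ) + 1)) ∧
      (2 * m ≤ l₀ + l₁ →
        σ (2 * m) =
          ((∏ j ∈ Icc 1 m, ((j : ℂ) - (l₀ : ℂ))) *
            ∏ j ∈ range m, (c + 2 * (j : ℂ) + 1 - 2 * (l₀ : ℂ))) /
          ((m.factorial : ℂ) * ∏ j ∈ range m, (c + 2 * (j : ℂ) + 1))) := by
  have hl1c : (l₁ : ℂ) = (l₀ : ℂ) - 1 := by
    rw [hl₁, Nat.cast_sub hl₀, Nat.cast_one]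
  intro m hm
  induction m, hm using Nat.le_induction with
  | base =>
    intro hle
    have hc0 : c + 1 ≠ 0 := by
      have := hc 0 (by omega); simpa using this
    constructor
    · rw [show 2*1-1 = 1 from rfl, h1, hl1c]
      simp only [Nat.sub_self, Icc_self, Icc_eq_empty_of_lt, prod_range_one,
        Nat.factorial_zero, Nat.cast_one, Nat.cast_zero]
      norm_num
      field_simp
      ring
    · intro h2
      have hc1 : c + 2 ≠ 0 := fun hx => hc 1 (by omega) (by push_cast; linear_combination hx)
      have hr := hrec 2 le_rfl
      norm_num at hr
      rw [hr, h1, h0, hl1c]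
      simp only [prod_range_one, Icc_self, prod_singleton, Nat.factorial_one, Nat.cast_one,
        Nat.cast_zero]
      have h2c : (2:ℂ) + c ≠ 0 := fun hx => hc1 (by linear_combination hx)
      simp only [mul_zero, add_zero]
      field_simp
      ring
  | succ n hn ih =>
    intro hle
    obtain ⟨k, rfl⟩ : ∃ k, n = k + 1 := ⟨n - 1, by omega⟩
    obtain ⟨hA, hB'⟩ := ih (by omega)
    have hB := hB' (by omega)
    simp only [Nat.add_sub_cancel] at hA ⊢
    -- abbreviations
    set P := ∏ j ∈ Icc 1 k, ((j : ℂ) - (l₀ : ℂ)) with hP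
    set Q := ∏ j ∈ range (k+1), (c + 2 * (j : ℂ) + 1 - 2 * (l₀ : ℂ)) with hQ
    set R := ∏ j ∈ range (k+1), (c + 2 * (j : ℂ) + 1) with hR
    have hRne : R ≠ 0 := by
      apply prod_ne_zero_iff.mpr
      intro j hj
      simp only [mem_range] at hj
      exact fun hx => hc (2*j) (by omega) (by push_cast; linear_combination hx)
    have hkfac : ((k.factorial : ℕ) : ℂ) ≠ 0 := by
      exact_mod_cast Nat.factorial_ne_zero k
    have hfac1 : (((k+1).factorial : ℕ) : ℂ) = ((k:ℂ)+1) * (k.factorial : ℕ) := by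
      rw [Nat.factorial_succ]; push_cast; ring
    have hIcc1 : (∏ j ∈ Icc 1 (k+1), ((j : ℂ) - (l₀ : ℂ)))
        = P * (((k:ℂ)+1) - l₀) := by
      rw [Finset.prod_Icc_succ_top (by omega : 1 ≤ k+1)]
      push_cast; ring
    have hQ1 : (∏ j ∈ range (k+2), (c + 2 * (j : ℂ) + 1 - 2 * (l₀ : ℂ)))
        = Q * (c + 2*((k:ℂ)+1) + 1 - 2*l₀) := by
      rw [Finset.prod_range_succ]; push_cast; ring
    have hR1 : (∏ j ∈ range (k+2), (c + 2 * (j : ℂ) + 1))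
        = R * (c + 2*((k:ℂ)+1) + 1) := by
      rw [Finset.prod_range_succ]; push_cast; ring
    have hck3 : c + 2*((k:ℂ)+1) + 1 ≠ 0 := fun hx =>
      hc (2*k+2) (by omega) (by push_cast; linear_combination hx)
    have h2k3 : ((2:ℂ)*k + 3) ≠ 0 := by
      have : ((2*k+3 : ℕ):ℂ) ≠ 0 := Nat.cast_ne_zero.mpr (by omega)
      push_cast at this; exact this
    have h2k3c : ((2:ℂ)*k + 3) + c ≠ 0 := fun hx =>
      hc (2*k+2) (by omega) (by push_cast; linear_combination hx)
    -- σ (2k+3)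
    have hr := hrec (2*k+3) (by omega)
    rw [show 2*k+3-1 = 2*(k+1) from by omega, show 2*k+3-2 = 2*(k+1)-1 from by omega] at hr
    rw [hA, hB, hl1c, hIcc1, hfac1] at hr
    push_cast at hr
    have goalA : σ (2 * (k + 1 + 1) - 1) =
        P * (((k:ℂ)+1) - l₀) * (Q * (c + 2*((k:ℂ)+1) + 1 - 2*l₀)) /
          ((((k:ℂ)+1) * ((k.factorial : ℕ) : ℂ)) * (R * (c + 2*((k:ℂ)+1) + 1))) := by
      rw [show 2*(k+1+1)-1 = 2*k+3 from by omega, hr]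
      have hk1 : ((k:ℂ)+1) ≠ 0 := by
        have : ((k+1 : ℕ):ℂ) ≠ 0 := Nat.cast_ne_zero.mpr (by omega)
        push_cast at this; exact this
      have d1 : ((2:ℂ)*k+3) * ((2:ℂ)*k+3+c) * (((k:ℂ)+1) * (k.factorial:ℕ) * R) ≠ 0 :=
        mul_ne_zero (mul_ne_zero h2k3 h2k3c) (mul_ne_zero (mul_ne_zero hk1 hkfac) hRne)
      have d2 : ((2:ℂ)*k+3) * ((2:ℂ)*k+3+c) * ((k.factorial:ℕ) * R) ≠ 0 :=
        mul_ne_zero (mul_ne_zero h2k3 h2k3c) (mul_ne_zero hkfac hRne)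
      have d3 : (((k:ℂ)+1) * (k.factorial:ℕ) * (R * (c + 2*((k:ℂ)+1) + 1))) ≠ 0 :=
        mul_ne_zero (mul_ne_zero hk1 hkfac) (mul_ne_zero hRne hck3)
      rw [div_mul_div_comm, div_mul_div_comm, div_add_div _ _ d1 d2,
        div_eq_div_iff (mul_ne_zero d1 d2) d3]
      ring
    refine ⟨by rw [hIcc1, hQ1, hR1, hfac1]; rw [goalA], ?_⟩
    intro hle2
    -- σ (2k+4)
    have h2k4 : ((2:ℂ)*k + 4) ≠ 0 := by
      have : ((2*k+4 : ℕ):ℂ) ≠ 0 := Nat.cast_ne_zero.mpr (by omega)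
      push_cast at this; exact this
    have h2k4c : ((2:ℂ)*k + 4) + c ≠ 0 := fun hx =>
      hc (2*k+3) (by omega) (by push_cast; linear_combination hx)
    have hfac2 : (((k+2).factorial : ℕ) : ℂ) = ((k:ℂ)+2) * ((k:ℂ)+1) * (k.factorial : ℕ) := by
      rw [Nat.factorial_succ, Nat.factorial_succ]; push_cast; ring
    have hIcc2 : (∏ j ∈ Icc 1 (k+2), ((j : ℂ) - (l₀ : ℂ)))
        = P * (((k:ℂ)+1) - l₀) * (((k:ℂ)+2) - l₀) := by
      rw [Finset.prod_Icc_succ_top (by omega : 1 ≤ k+2),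
        Finset.prod_Icc_succ_top (by omega : 1 ≤ k+1)]
      push_cast; ring
    have hr2 := hrec (2*k+4) (by omega)
    rw [show 2*k+4-1 = 2*(k+1+1)-1 from by omega, show 2*k+4-2 = 2*(k+1) from by omega] at hr2
    rw [goalA, hB, hl1c, hIcc1, hfac1] at hr2
    push_cast at hr2
    have hk1 : ((k:ℂ)+1) ≠ 0 := by
      have : ((k+1 : ℕ):ℂ) ≠ 0 := Nat.cast_ne_zero.mpr (by omega)
      push_cast at this; exact this
    rw [show 2*(k+1+1) = 2*k+4 from by omega, hr2, hIcc2, hQ1, hR1, hfac2]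
    have e1 : ((2:ℂ)*k+4) * ((2:ℂ)*k+4+c) *
        (((k:ℂ)+1) * (k.factorial:ℕ) * (R * (c + 2*((k:ℂ)+1) + 1))) ≠ 0 :=
      mul_ne_zero (mul_ne_zero h2k4 h2k4c)
        (mul_ne_zero (mul_ne_zero hk1 hkfac) (mul_ne_zero hRne hck3))
    have e2 : ((2:ℂ)*k+4) * ((2:ℂ)*k+4+c) * (((k:ℂ)+1) * (k.factorial:ℕ) * R) ≠ 0 :=
      mul_ne_zero (mul_ne_zero h2k4 h2k4c) (mul_ne_zero (mul_ne_zero hk1 hkfac) hRne)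
    have e3 : ((k:ℂ)+2) * ((k:ℂ)+1) * (k.factorial:ℕ) * (R * (c + 2*((k:ℂ)+1) + 1)) ≠ 0 := by
      have hk2 : ((k:ℂ)+2) ≠ 0 := by
        have : ((k+2 : ℕ):ℂ) ≠ 0 := Nat.cast_ne_zero.mpr (by omega)
        push_cast at this; exact this
      exact mul_ne_zero (mul_ne_zero (mul_ne_zero hk2 hk1) hkfac) (mul_ne_zero hRne hck3)
    rw [div_mul_div_comm, div_mul_div_comm, div_add_div _ _ e1 e2,
      div_eq_div_iff (mul_ne_zero e1 e2) e3]
    ring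
end

section
/- Let gau(x) = (sin πx)^{l_0+1}(cos πx)^{l_1+1} and H_T = −d²/dx² + l_0(l_0+1)π²/sin²(πx) + l_1(l_1+1)π²/cos²(πx). Then the gauge-transformed operator 𝓗_T = gau(x)^{−1} ∘ H_T ∘ gau(x) equals −d²/dx² − 2π((l_0+1)cot(πx) − (l_1+1)tan(πx)) d/dx + (l_0+l_1+2)² π². -/
open Real

theorem stmt14 (l₀ l₁ : ℕ) (f : ℝ → ℝ) (x : ℝ)
    (hs : Real.sin (π * x) ≠ 0) (hc : Real.cos (π * x) ≠ 0)
    (hf : ContDiffAt ℝ 2 f x) :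
    (Real.sin (π * x) ^ (l₀ + 1) * Real.cos (π * x) ^ (l₁ + 1))⁻¹ *
      (-(deriv (deriv (fun y => Real.sin (π * y) ^ (l₀ + 1) *
            Real.cos (π * y) ^ (l₁ + 1) * f y)) x)
        + (l₀ : ℝ) * ((l₀ : ℝ) + 1) * π ^ 2 / Real.sin (π * x) ^ 2 *
            (Real.sin (π * x) ^ (l₀ + 1) * Real.cos (π * x) ^ (l₁ + 1) * f x)
        + (l₁ : ℝ) * ((l₁ : ℝ) + 1) * π ^ 2 / Real.cos (π * x) ^ 2 *
            (Real.sin (π * x) ^ (l₀ + 1) * Real.cos (π * x) ^ (l₁ + 1) * f x))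
    = -(deriv (deriv f) x)
      - 2 * π * (((l₀ : ℝ) + 1) * Real.cos (π * x) / Real.sin (π * x)
          - ((l₁ : ℝ) + 1) * Real.sin (π * x) / Real.cos (π * x)) * deriv f x
      + ((l₀ : ℝ) + (l₁ : ℝ) + 2) ^ 2 * π ^ 2 * f x := by
  have hpi : ∀ y : ℝ, HasDerivAt (fun y : ℝ => π * y) π y := fun y => by
    simpa using (hasDerivAt_id y).const_mul π
  have hS : ∀ y : ℝ, HasDerivAt (fun y => Real.sin (π * y)) (Real.cos (π * y) * π) y :=
    fun y => by simpa [Function.comp_def] using (Real.hasDerivAt_sin (π * y)).comp y (hpi y)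
  have hC : ∀ y : ℝ, HasDerivAt (fun y => Real.cos (π * y)) (-Real.sin (π * y) * π) y :=
    fun y => by simpa [Function.comp_def] using (Real.hasDerivAt_cos (π * y)).comp y (hpi y)
  have hSp : ∀ (n : ℕ) (y : ℝ), HasDerivAt (fun y => Real.sin (π * y) ^ n)
      ((n : ℝ) * Real.sin (π * y) ^ (n - 1) * (Real.cos (π * y) * π)) y :=
    fun n y => (hS y).pow n
  have hCp : ∀ (n : ℕ) (y : ℝ), HasDerivAt (fun y => Real.cos (π * y) ^ n)
      ((n : ℝ) * Real.cos (π * y) ^ (n - 1) * (-Real.sin (π * y) * π)) y :=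
    fun n y => (hC y).pow n
  set G : ℝ → ℝ := fun y =>
      ((l₀ : ℝ) + 1) * Real.sin (π * y) ^ l₀ * (Real.cos (π * y) * π) * Real.cos (π * y) ^ (l₁ + 1)
    + Real.sin (π * y) ^ (l₀ + 1) *
        (((l₁ : ℝ) + 1) * Real.cos (π * y) ^ l₁ * (-Real.sin (π * y) * π)) with hGdef
  have hg : ∀ y : ℝ, HasDerivAt
      (fun y => Real.sin (π * y) ^ (l₀ + 1) * Real.cos (π * y) ^ (l₁ + 1)) (G y) y := by
    intro y
    have := (hSp (l₀ + 1) y).fun_mul (hCp (l₁ + 1) y)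
    simpa [hGdef] using this
  -- differentiability facts
  obtain ⟨u, hu, hcd⟩ := hf.contDiffOn (le_refl 2) (by simp)
  have hxo : x ∈ interior u := mem_interior_iff_mem_nhds.2 hu
  have hcd' : ContDiffOn ℝ 2 f (interior u) := hcd.mono interior_subset
  have hder1 : ContDiffOn ℝ 1 (deriv f) (interior u) :=
    hcd'.deriv_of_isOpen isOpen_interior (by norm_num)
  have hfd2 : DifferentiableAt ℝ (deriv f) x :=
    (hder1.differentiableOn (by norm_num)).differentiableAt (isOpen_interior.mem_nhds hxo)
  have hev : ∀ᶠ y in nhds x, DifferentiableAt ℝ f y := by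
    filter_upwards [isOpen_interior.mem_nhds hxo] with y hy
    exact (hcd'.differentiableOn (by norm_num)).differentiableAt
      (isOpen_interior.mem_nhds hy)
  have hd1 : deriv (fun y => Real.sin (π * y) ^ (l₀ + 1) * Real.cos (π * y) ^ (l₁ + 1) * f y)
      =ᶠ[nhds x] fun y => G y * f y
        + Real.sin (π * y) ^ (l₀ + 1) * Real.cos (π * y) ^ (l₁ + 1) * deriv f y := by
    filter_upwards [hev] with y hy
    exact ((hg y).mul hy.hasDerivAt).deriv
  rw [hd1.deriv_eq]
  -- second derivative
  have hG' := ((((hSp l₀ x).const_mul ((l₀ : ℝ) + 1)).fun_mul ((hC x).mul_const π)).fun_mul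
      (hCp (l₁ + 1) x)).add
    ((hSp (l₀ + 1) x).fun_mul
      (((hCp l₁ x).const_mul ((l₁ : ℝ) + 1)).fun_mul (((hS x).fun_neg).mul_const π)))
  have hG'' : HasDerivAt G _ x := hG'
  have hfx : HasDerivAt f (deriv f x) x := (hf.differentiableAt (by norm_num)).hasDerivAt
  have hψ := ((hG''.fun_mul hfx).fun_add ((hg x).fun_mul hfd2.hasDerivAt))
  rw [hψ.deriv]
  have hpyth : Real.sin (π * x) ^ 2 + Real.cos (π * x) ^ 2 = 1 := Real.sin_sq_add_cos_sq _
  rcases l₀ with _ | m <;> rcases l₁ with _ | n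
  · simp only [hGdef]
    push_cast
    field_simp
    ring
  · simp only [hGdef]
    push_cast
    field_simp
    linear_combination ((-2:ℝ) * Real.sin (π * x) ^ 2 * Real.cos (π * x) ^ 2 * π ^ 2 * f x
        * Real.cos (π * x) ^ n
      + (-3:ℝ) * Real.sin (π * x) ^ 2 * Real.cos (π * x) ^ 2 * π ^ 2 * f x * (n:ℝ)
        * Real.cos (π * x) ^ n
      + (-1:ℝ) * Real.sin (π * x) ^ 2 * Real.cos (π * x) ^ 2 * π ^ 2 * f x * (n:ℝ) ^ 2
        * Real.cos (π * x) ^ n) * hpyth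
  · simp only [hGdef]
    push_cast
    field_simp
    linear_combination ((-2:ℝ) * Real.sin (π * x) ^ 2 * Real.cos (π * x) ^ 2 * π ^ 2 * f x
        * Real.sin (π * x) ^ m
      + (-3:ℝ) * Real.sin (π * x) ^ 2 * Real.cos (π * x) ^ 2 * π ^ 2 * f x * (m:ℝ)
        * Real.sin (π * x) ^ m
      + (-1:ℝ) * Real.sin (π * x) ^ 2 * Real.cos (π * x) ^ 2 * π ^ 2 * f x * (m:ℝ) ^ 2
        * Real.sin (π * x) ^ m) * hpyth
  · simp only [hGdef]
    push_cast
    field_simp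
    linear_combination ((-2:ℝ) * Real.sin (π * x) ^ 2 * Real.cos (π * x) ^ 4 * π ^ 2 * f x
        * Real.sin (π * x) ^ m * Real.cos (π * x) ^ n
      + (-3:ℝ) * Real.sin (π * x) ^ 2 * Real.cos (π * x) ^ 4 * π ^ 2 * f x * (m:ℝ)
        * Real.sin (π * x) ^ m * Real.cos (π * x) ^ n
      + (-1:ℝ) * Real.sin (π * x) ^ 2 * Real.cos (π * x) ^ 4 * π ^ 2 * f x * (m:ℝ) ^ 2
        * Real.sin (π * x) ^ m * Real.cos (π * x) ^ n
      + (-2:ℝ) * Real.sin (π * x) ^ 4 * Real.cos (π * x) ^ 2 * π ^ 2 * f x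
        * Real.sin (π * x) ^ m * Real.cos (π * x) ^ n
      + (-3:ℝ) * Real.sin (π * x) ^ 4 * Real.cos (π * x) ^ 2 * π ^ 2 * f x * (n:ℝ)
        * Real.sin (π * x) ^ m * Real.cos (π * x) ^ n
      + (-1:ℝ) * Real.sin (π * x) ^ 4 * Real.cos (π * x) ^ 2 * π ^ 2 * f x * (n:ℝ) ^ 2
        * Real.sin (π * x) ^ m * Real.cos (π * x) ^ n) * hpyth
end
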